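/- For every dimension d ∈ ℕ there exists N ∈ ℕ such that: for every finite set P ⊂ ℝ^d in which all pairwise Euclidean distances between distinct points are distinct, every minimum spanning tree T of the complete graph on P with edge weights the Euclidean distances, and every x ∈ P, the number of edges of T incident to x is at most N. -/

import Mathlib

open scoped BigOperators

/-- The weight of an unordered pair of points of a metric space: the distance between
its two endpoints. -/
noncomputable def pairDist (V : Type*) [PseudoMetricSpace V] : Sym2 V → ℝ :=
  Sym2.lift ⟨fun p q => dist p q, fun p q => dist_comm p q⟩

open SimpleGraph RealInnerProductSpace

/-- Transfer preconnectedness along per-edge reachability. -/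
lemma precon_transfer {V : Type*} {G H : SimpleGraph V}
    (h : ∀ a b, G.Adj a b → H.Reachable a b) (hG : G.Preconnected) : H.Preconnected := by
  intro u v
  obtain ⟨p⟩ := hG u v
  induction p with
  | nil => exact Reachable.refl _
  | cons hadj _ ih => exact (h _ _ hadj).trans ih

/-- Every finite connected graph contains a spanning tree. -/
lemma exists_isTree_le {V : Type*} [Fintype V] (G : SimpleGraph V) (hG : G.Connected) :
    ∃ T : SimpleGraph V, T ≤ G ∧ T.Connected ∧ T.IsAcyclic := by
  classical
  suffices H : ∀ n (G : SimpleGraph V), G.edgeSet.ncard = n → G.Connected →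
      ∃ T : SimpleGraph V, T ≤ G ∧ T.Connected ∧ T.IsAcyclic from H _ G rfl hG
  intro n
  induction n using Nat.strong_induction_on with
  | _ n ih =>
    intro G hn hG
    by_cases hac : G.IsAcyclic
    · exact ⟨G, le_refl _, hG, hac⟩
    · rw [isAcyclic_iff_forall_edge_isBridge] at hac
      push_neg at hac
      obtain ⟨e, he, hbr⟩ := hac
      induction e using Sym2.ind with
      | _ v w =>
        have hvw : G.Adj v w := G.mem_edgeSet.mp he
        rw [isBridge_iff] at hbr
        push_neg at hbr
        have hreach : (G \ fromEdgeSet {s(v, w)}).Reachable v w := hbr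
        have hconn' : (G \ fromEdgeSet {s(v, w)}).Connected := by
          rw [connected_iff]
          refine ⟨precon_transfer (fun a b hab => ?_) hG.preconnected, hG.nonempty⟩
          by_cases hab' : s(a, b) = s(v, w)
          · rw [Sym2.eq_iff] at hab'
            rcases hab' with ⟨rfl, rfl⟩ | ⟨rfl, rfl⟩
            · exact hreach
            · exact hreach.symm
          · exact Adj.reachable (by simp [hab, hab'])
        have hlt : (G \ fromEdgeSet {s(v, w)}).edgeSet.ncard < n := by
          have hE : (G \ fromEdgeSet {s(v, w)}).edgeSet = G.edgeSet \ {s(v, w)} := by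
            have hd : ¬ (s(v, w)).IsDiag := by simp [hvw.ne]
            ext f
            simp only [edgeSet_sdiff, edgeSet_fromEdgeSet, Set.mem_diff,
              Set.mem_singleton_iff, Set.mem_setOf_eq]
            constructor
            · rintro ⟨h1, h2⟩
              exact ⟨h1, fun hf => h2 ⟨hf, hf ▸ hd⟩⟩
            · rintro ⟨h1, h2⟩
              exact ⟨h1, fun hf => h2 hf.1⟩
          rw [hE, ← hn]
          exact Set.ncard_diff_singleton_lt_of_mem he (Set.toFinite _)
        obtain ⟨T, hT, h1, h2⟩ := ih _ hlt _ rfl hconn'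
        exact ⟨T, hT.trans sdiff_le, h1, h2⟩

@[simp] lemma pairDist_mk {V : Type*} [PseudoMetricSpace V] (a b : V) :
    pairDist V s(a, b) = dist a b := rfl

lemma pairDist_nonneg {V : Type*} [PseudoMetricSpace V] (e : Sym2 V) : 0 ≤ pairDist V e := by
  induction e using Sym2.ind with
  | _ a b => exact dist_nonneg

lemma sym2_ne' {V : Type*} {a b c d : V} (h : ¬((a = c ∧ b = d) ∨ (a = d ∧ b = c))) :
    s(a, b) ≠ s(c, d) := fun he => h (Sym2.eq_iff.mp he)

/-- The exchange property of minimum spanning trees: if `xy` and `xz` are edges of an MST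
with `dist x z ≤ dist x y`, then `dist x y ≤ dist y z`. -/
lemma mst_exchange {V : Type*} [MetricSpace V] [Fintype V] (T : SimpleGraph V)
    (hc : T.Connected) (ha : T.IsAcyclic)
    (hmin : ∀ T' : SimpleGraph V, T'.Connected → T'.IsAcyclic →
      (∑ᶠ e ∈ T.edgeSet, pairDist V e) ≤ ∑ᶠ e ∈ T'.edgeSet, pairDist V e)
    {x y z : V} (hxy : T.Adj x y) (hxz : T.Adj x z) (hyz : y ≠ z)
    (hle : dist x z ≤ dist x y) : dist x y ≤ dist y z := by
  classical
  by_contra hlt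
  push_neg at hlt
  set e₀ : Sym2 V := s(x, y) with he₀
  set e₁ : Sym2 V := s(y, z) with he₁
  have hxny : x ≠ y := hxy.ne
  have hxnz : x ≠ z := hxz.ne
  have he01 : e₁ ≠ e₀ :=
    sym2_ne' (by rintro (⟨h1, -⟩ | ⟨-, h2⟩); exacts [hxny h1.symm, hxnz h2.symm])
  -- e₁ is not an edge of T
  have he₁T : e₁ ∉ T.edgeSet := by
    intro hmem
    have hadj : T.Adj y z := T.mem_edgeSet.mp hmem
    have hbr := (isAcyclic_iff_forall_adj_isBridge.mp ha) hadj
    rw [isBridge_iff] at hbr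
    apply hbr
    have h1 : (T \ fromEdgeSet {s(y, z)}).Adj y x := by
      refine ⟨hxy.symm, ?_⟩
      rw [fromEdgeSet_adj, Set.mem_singleton_iff]
      rintro ⟨hm, -⟩
      exact sym2_ne' (by rintro (⟨-, h⟩ | ⟨-, h⟩); exacts [hxnz h, hxny h]) hm
    have h2 : (T \ fromEdgeSet {s(y, z)}).Adj x z := by
      refine ⟨hxz, ?_⟩
      rw [fromEdgeSet_adj, Set.mem_singleton_iff]
      rintro ⟨hm, -⟩
      exact sym2_ne' (by rintro (⟨h, -⟩ | ⟨h, -⟩); exacts [hxny h, hxnz h]) hm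
    exact h1.reachable.trans h2.reachable
  -- the exchanged graph
  set T' : SimpleGraph V := (T \ fromEdgeSet {e₀}) ⊔ fromEdgeSet {e₁} with hT'
  have hT'adj_xz : T'.Adj x z := by
    refine Or.inl ⟨hxz, ?_⟩
    rw [fromEdgeSet_adj, Set.mem_singleton_iff, he₀]
    rintro ⟨hm, -⟩
    exact sym2_ne' (by rintro (⟨-, h⟩ | ⟨h, -⟩); exacts [hyz h.symm, hxny h]) hm
  have hT'adj_zy : T'.Adj z y := by
    refine Or.inr ?_
    rw [fromEdgeSet_adj, Set.mem_singleton_iff, he₁]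
    exact ⟨Sym2.eq_swap, hyz.symm⟩
  have hT'conn : T'.Connected := by
    rw [connected_iff]
    refine ⟨precon_transfer (fun a b hab => ?_) hc.preconnected, hc.nonempty⟩
    by_cases hab' : s(a, b) = e₀
    · have hxyr : T'.Reachable x y := hT'adj_xz.reachable.trans hT'adj_zy.reachable
      rw [he₀, Sym2.eq_iff] at hab'
      rcases hab' with ⟨rfl, rfl⟩ | ⟨rfl, rfl⟩
      · exact hxyr
      · exact hxyr.symm
    · exact Adj.reachable (Or.inl ⟨hab, by
        simp only [fromEdgeSet_adj, Set.mem_singleton_iff]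
        exact fun h => hab' h.1⟩)
  -- edge set of T'
  have hE' : T'.edgeSet = insert e₁ (T.edgeSet \ {e₀}) := by
    have hd : ¬ e₁.IsDiag := by simp [he₁, hyz]
    have hd₀ : ¬ e₀.IsDiag := by simp [he₀, hxny]
    rw [hT']
    ext f
    simp only [edgeSet_sup, edgeSet_sdiff, edgeSet_fromEdgeSet, Set.mem_union, Set.mem_diff,
      Set.mem_singleton_iff, Set.mem_setOf_eq, Set.mem_insert_iff]
    constructor
    · rintro (⟨h1, h2⟩ | ⟨h1, h2⟩)
      · exact Or.inr ⟨h1, fun hf => h2 ⟨hf, hf ▸ hd₀⟩⟩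
      · exact Or.inl h1
    · rintro (rfl | ⟨h1, h2⟩)
      · exact Or.inr ⟨rfl, hd⟩
      · exact Or.inl ⟨h1, fun hf => h2 hf.1⟩
  -- sums
  have key : ∀ G : SimpleGraph V, (∑ᶠ e ∈ G.edgeSet, pairDist V e)
      = ∑ e ∈ (Set.toFinite G.edgeSet).toFinset, pairDist V e := fun G => by
    rw [← finsum_mem_coe_finset, Set.Finite.coe_toFinset]
  obtain ⟨Ts, hTs_le, hTs_conn, hTs_acyc⟩ := exists_isTree_le T' hT'conn
  have h1 : (∑ᶠ e ∈ T.edgeSet, pairDist V e) ≤ ∑ᶠ e ∈ Ts.edgeSet, pairDist V e :=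
    hmin Ts hTs_conn hTs_acyc
  have h2 : (∑ᶠ e ∈ Ts.edgeSet, pairDist V e) ≤ ∑ᶠ e ∈ T'.edgeSet, pairDist V e := by
    rw [key, key]
    apply Finset.sum_le_sum_of_subset_of_nonneg
    · intro f hf
      simp only [Set.Finite.mem_toFinset] at *
      exact edgeSet_mono hTs_le hf
    · exact fun f _ _ => pairDist_nonneg f
  have h3 : (∑ᶠ e ∈ T'.edgeSet, pairDist V e) < ∑ᶠ e ∈ T.edgeSet, pairDist V e := by
    rw [key, key]
    have hST' : (Set.toFinite T'.edgeSet).toFinset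
        = insert e₁ ((Set.toFinite T.edgeSet).toFinset.erase e₀) := by
      ext f
      simp only [Set.Finite.mem_toFinset, hE', Set.mem_insert_iff, Set.mem_diff,
        Set.mem_singleton_iff, Finset.mem_insert, Finset.mem_erase, Set.Finite.mem_toFinset]
      tauto
    rw [hST', Finset.sum_insert (by
      simp only [Finset.mem_erase, Set.Finite.mem_toFinset]
      exact fun h => he₁T h.2)]
    rw [Finset.sum_erase_eq_sub (by rw [Set.Finite.mem_toFinset, he₀]; exact T.mem_edgeSet.mpr hxy)]
    have : pairDist V e₁ < pairDist V e₀ := by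
      simpa [he₀, he₁] using hlt
    linarith
  linarith

/-- Two unit directions towards the two far corners of a triangle whose side opposite the
apex is longest are at distance at least `1`. -/
lemma geom_sep {E : Type*} [NormedAddCommGroup E] [InnerProductSpace ℝ E] {a b c : E}
    (hb : b ≠ a) (hc : c ≠ a) (h1 : dist a c ≤ dist a b) (h2 : dist a b ≤ dist b c) :
    1 ≤ dist (‖b - a‖⁻¹ • (b - a)) (‖c - a‖⁻¹ • (c - a)) := by
  set u := b - a with hu
  set v := c - a with hv
  have hru : (0:ℝ) < ‖u‖ := by simpa [hu, sub_ne_zero] using hb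
  have hrv : (0:ℝ) < ‖v‖ := by simpa [hv, sub_ne_zero] using hc
  have hab : dist a b = ‖u‖ := by rw [dist_eq_norm, hu, norm_sub_rev]
  have hac : dist a c = ‖v‖ := by rw [dist_eq_norm, hv, norm_sub_rev]
  have hbc : dist b c = ‖u - v‖ := by rw [dist_eq_norm]; congr 1; rw [hu, hv]; abel
  rw [hab, hac] at h1
  rw [hab, hbc] at h2
  have hinner : ⟪u, v⟫ ≤ ‖u‖ * ‖v‖ / 2 := by
    have hexp : ‖u - v‖ ^ 2 = ‖u‖ ^ 2 - 2 * ⟪u, v⟫ + ‖v‖ ^ 2 := norm_sub_sq_real u v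
    nlinarith [h2, h1, hru, hrv]
  rw [dist_eq_norm]
  have hexp2 : ‖‖u‖⁻¹ • u - ‖v‖⁻¹ • v‖ ^ 2 =
      ‖‖u‖⁻¹ • u‖ ^ 2 - 2 * ⟪‖u‖⁻¹ • u, ‖v‖⁻¹ • v⟫ + ‖‖v‖⁻¹ • v‖ ^ 2 :=
    norm_sub_sq_real _ _
  have hnu : ‖‖u‖⁻¹ • u‖ = 1 := by
    rw [norm_smul, norm_inv, norm_norm, inv_mul_cancel₀ hru.ne']
  have hnv : ‖‖v‖⁻¹ • v‖ = 1 := by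
    rw [norm_smul, norm_inv, norm_norm, inv_mul_cancel₀ hrv.ne']
  have hsm : ⟪‖u‖⁻¹ • u, ‖v‖⁻¹ • v⟫ = ‖u‖⁻¹ * (‖v‖⁻¹ * ⟪u, v⟫) := by
    rw [real_inner_smul_left, real_inner_smul_right]
  have hinner2 : ⟪‖u‖⁻¹ • u, ‖v‖⁻¹ • v⟫ ≤ 1 / 2 := by
    rw [hsm, ← mul_assoc]
    calc ‖u‖⁻¹ * ‖v‖⁻¹ * ⟪u, v⟫ ≤ ‖u‖⁻¹ * ‖v‖⁻¹ * (‖u‖ * ‖v‖ / 2) := by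
          apply mul_le_mul_of_nonneg_left hinner (by positivity)
      _ = 1 / 2 := by field_simp
  nlinarith [hexp2, hnu, hnv, hinner2, norm_nonneg (‖u‖⁻¹ • u - ‖v‖⁻¹ • v)]

/-- **Bounded degree of Euclidean minimum spanning trees.**  For every dimension `d` there
is an `N` such that: for every finite set `P ⊂ ℝ^d` in which all pairwise Euclidean
distances between distinct points are distinct, every minimum spanning tree `T` of the
complete graph on `P` (with edge weights the Euclidean distances), and every `x ∈ P`, the
number of edges of `T` incident to `x` is at most `N`. -/
theorem mst_degree_bounded (d : ℕ) :
    ∃ N : ℕ, ∀ P : Finset (EuclideanSpace ℝ (Fin d)),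
      (∀ p q p' q' : ↥P, p ≠ q → p' ≠ q' →
        dist (p : EuclideanSpace ℝ (Fin d)) (q : EuclideanSpace ℝ (Fin d))
          = dist (p' : EuclideanSpace ℝ (Fin d)) (q' : EuclideanSpace ℝ (Fin d)) →
        ({(p : EuclideanSpace ℝ (Fin d)), (q : EuclideanSpace ℝ (Fin d))} :
            Set (EuclideanSpace ℝ (Fin d)))
          = {(p' : EuclideanSpace ℝ (Fin d)), (q' : EuclideanSpace ℝ (Fin d))}) →
      ∀ T : SimpleGraph ↥P, T.Connected → T.IsAcyclic →
        (∀ T' : SimpleGraph ↥P, T'.Connected → T'.IsAcyclic →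
          (∑ᶠ e ∈ T.edgeSet, pairDist ↥P e) ≤ ∑ᶠ e ∈ T'.edgeSet, pairDist ↥P e) →
        ∀ x : ↥P, {y : ↥P | T.Adj x y}.ncard ≤ N := by
  classical
  set E := EuclideanSpace ℝ (Fin d)
  -- cover the unit sphere by finitely many balls of radius 1/2
  have hTB : TotallyBounded (Metric.sphere (0 : E) 1) :=
    (isCompact_sphere 0 1).totallyBounded
  rw [Metric.totallyBounded_iff] at hTB
  obtain ⟨t, htfin, htcov⟩ := hTB (1/2) (by norm_num)
  refine ⟨htfin.toFinset.card, ?_⟩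
  intro P _hdist T hconn hacyc hmin x
  -- the direction map
  set dir : ↥P → E := fun y => ‖(y : E) - (x : E)‖⁻¹ • ((y : E) - (x : E)) with hdir
  have hdir_sphere : ∀ y : ↥P, T.Adj x y → dir y ∈ Metric.sphere (0 : E) 1 := by
    intro y hy
    have hne : (y : E) ≠ (x : E) := fun h => hy.ne' (Subtype.coe_injective h)
    have hpos : (0:ℝ) < ‖(y : E) - (x : E)‖ := by simpa [sub_ne_zero] using hne
    simp only [Metric.mem_sphere, dist_zero_right, hdir, norm_smul, norm_inv, norm_norm]
    exact inv_mul_cancel₀ hpos.ne'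
  -- a separation property between directions of distinct neighbours
  have hsep : ∀ y₁ y₂ : ↥P, T.Adj x y₁ → T.Adj x y₂ → y₁ ≠ y₂ →
      1 ≤ dist (dir y₁) (dir y₂) := by
    have main : ∀ y₁ y₂ : ↥P, T.Adj x y₁ → T.Adj x y₂ → y₁ ≠ y₂ →
        dist x y₂ ≤ dist x y₁ → 1 ≤ dist (dir y₁) (dir y₂) := by
      intro y₁ y₂ h1 h2 hne hle
      have hxy : dist x y₁ ≤ dist y₁ y₂ :=
        mst_exchange T hconn hacyc hmin h1 h2 hne hle
      have hb : (y₁ : E) ≠ (x : E) := fun h => h1.ne' (Subtype.coe_injective h)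
      have hc : (y₂ : E) ≠ (x : E) := fun h => h2.ne' (Subtype.coe_injective h)
      have := geom_sep hb hc (by rwa [← Subtype.dist_eq, ← Subtype.dist_eq])
        (by rwa [← Subtype.dist_eq, ← Subtype.dist_eq])
      simpa [hdir] using this
    intro y₁ y₂ h1 h2 hne
    rcases le_total (dist x y₂) (dist x y₁) with h | h
    · exact main y₁ y₂ h1 h2 hne h
    · rw [dist_comm (dir y₁) (dir y₂)]
      exact main y₂ y₁ h2 h1 hne.symm h
  -- choose, for each neighbour, a covering centre
  have hchoice : ∀ y : ↥P, ∃ c, T.Adj x y → c ∈ t ∧ dist (dir y) c < 1/2 := by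
    intro y
    by_cases hy : T.Adj x y
    · have := htcov (hdir_sphere y hy)
      rw [Set.mem_iUnion₂] at this
      obtain ⟨c, hct, hcb⟩ := this
      exact ⟨c, fun _ => ⟨hct, by simpa [Metric.mem_ball] using hcb⟩⟩
    · exact ⟨0, fun h => absurd h hy⟩
  choose f hf using hchoice
  calc {y : ↥P | T.Adj x y}.ncard ≤ t.ncard := by
        apply Set.ncard_le_ncard_of_injOn f (fun y hy => (hf y hy).1) ?_ htfin
        intro y₁ hy₁ y₂ hy₂ hfe
        by_contra hne
        have hd1 := (hf y₁ hy₁).2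
        have hd2 := (hf y₂ hy₂).2
        have := hsep y₁ y₂ hy₁ hy₂ hne
        have htri : dist (dir y₁) (dir y₂) ≤ dist (dir y₁) (f y₁) + dist (f y₂) (dir y₂) := by
          rw [hfe]
          exact dist_triangle _ _ _
        rw [dist_comm (f y₂)] at htri
        linarith
    _ = htfin.toFinset.card := Set.ncard_eq_toFinset_card t htfin
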